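/- arXiv:2001.00658 — 3 statements merged into one kernel-verified Lean document; each statement's English description precedes it below -/
import Mathlib

section
/- There is no quadratic polynomial h(s₁,s₂,y) = a₀ + a₁s₁ + a₂s₂ + a₃y + a₁₂s₁s₂ + a₁₃s₁y + a₂₃s₂y with real coefficients such that for all s₁, s₂, y ∈ {−1,1}: h(s₁,s₂,y) = 0 when y = s₁s₂, and h(s₁,s₂,y) > 0 when y ≠ s₁s₂. -/
/-!
On either parity class `y = ε s₁ s₂` every non-constant monomial of `h` restricts to a
non-constant character `s₁`, `s₂` or `s₁ s₂` of `(s₁, s₂) ∈ {-1, 1}²`, which sums to zero.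
So `h` has the same sum `4 a₀` over the four points with `y = s₁ s₂`, where it would vanish,
and over the four points with `y = -s₁ s₂`, where it would be positive.
-/

section IsingQuadratic

variable (a₀ a₁ a₂ a₃ a₁₂ a₁₃ a₂₃ : ℝ)

def isingQuadratic (s₁ s₂ y : ℝ) : ℝ :=
  a₀ + a₁ * s₁ + a₂ * s₂ + a₃ * y + a₁₂ * s₁ * s₂ + a₁₃ * s₁ * y + a₂₃ * s₂ * y

theorem isingQuadratic_sum_parityClass (ε : ℝ) :
    isingQuadratic a₀ a₁ a₂ a₃ a₁₂ a₁₃ a₂₃ 1 1 ε +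
      isingQuadratic a₀ a₁ a₂ a₃ a₁₂ a₁₃ a₂₃ 1 (-1) (-ε) +
      isingQuadratic a₀ a₁ a₂ a₃ a₁₂ a₁₃ a₂₃ (-1) 1 (-ε) +
      isingQuadratic a₀ a₁ a₂ a₃ a₁₂ a₁₃ a₂₃ (-1) (-1) ε = 4 * a₀ := by
  simp only [isingQuadratic]
  ring

end IsingQuadratic

theorem stmt_2 :
    ¬ ∃ a₀ a₁ a₂ a₃ a₁₂ a₁₃ a₂₃ : ℝ, ∀ s₁ s₂ y : ℝ,
      s₁ ∈ ({-1, 1} : Set ℝ) → s₂ ∈ ({-1, 1} : Set ℝ) → y ∈ ({-1, 1} : Set ℝ) →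
      (y = s₁ * s₂ →
        a₀ + a₁ * s₁ + a₂ * s₂ + a₃ * y + a₁₂ * s₁ * s₂ + a₁₃ * s₁ * y + a₂₃ * s₂ * y = 0) ∧
      (y ≠ s₁ * s₂ →
        a₀ + a₁ * s₁ + a₂ * s₂ + a₃ * y + a₁₂ * s₁ * s₂ + a₁₃ * s₁ * y + a₂₃ * s₂ * y > 0) := by
  rintro ⟨a₀, a₁, a₂, a₃, a₁₂, a₁₃, a₂₃, h⟩
  set q := isingQuadratic a₀ a₁ a₂ a₃ a₁₂ a₁₃ a₂₃
  have hm : (-1 : ℝ) ∈ ({-1, 1} : Set ℝ) := .inl rfl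
  have hp : (1 : ℝ) ∈ ({-1, 1} : Set ℝ) := .inr rfl
  have hzero : q 1 1 1 + q 1 (-1) (-1) + q (-1) 1 (-1) + q (-1) (-1) 1 = 0 := by
    have h₁ : q 1 1 1 = 0 := (h 1 1 1 hp hp hp).1 (by norm_num)
    have h₂ : q 1 (-1) (-1) = 0 := (h 1 (-1) (-1) hp hm hm).1 (by norm_num)
    have h₃ : q (-1) 1 (-1) = 0 := (h (-1) 1 (-1) hm hp hm).1 (by norm_num)
    have h₄ : q (-1) (-1) 1 = 0 := (h (-1) (-1) 1 hm hm hp).1 (by norm_num)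
    linarith
  have hpos : 0 < q 1 1 (-1) + q 1 (-1) 1 + q (-1) 1 1 + q (-1) (-1) (-1) := by
    have h₁ : q 1 1 (-1) > 0 := (h 1 1 (-1) hp hp hm).2 (by norm_num)
    have h₂ : q 1 (-1) 1 > 0 := (h 1 (-1) 1 hp hm hp).2 (by norm_num)
    have h₃ : q (-1) 1 1 > 0 := (h (-1) 1 1 hm hp hp).2 (by norm_num)
    have h₄ : q (-1) (-1) (-1) > 0 := (h (-1) (-1) (-1) hm hm hm).2 (by norm_num)
    linarith
  have hsumEven := isingQuadratic_sum_parityClass a₀ a₁ a₂ a₃ a₁₂ a₁₃ a₂₃ 1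
  have hsumOdd := isingQuadratic_sum_parityClass a₀ a₁ a₂ a₃ a₁₂ a₁₃ a₂₃ (-1)
  rw [neg_neg] at hsumOdd
  linarith
end

section
/- If h is a quadratic polynomial in Ising variables s₁, s₂, y ∈ {−1,1} that vanishes on all four points with y = s₁s₂, then the sum of the values of h over the four points with y = −s₁s₂ equals 0; in particular h cannot be ≥ 1 on all four of those points. -/
/-! On either slice `y = ε s₁ s₂` every monomial of `h` other than the constant restricts to
`± s₁`, `± s₂` or `± s₁ s₂`, which sum to zero over `{-1, 1}²`. Hence both slices have the same
sum `4 a₀`; vanishing on the slice `y = s₁ s₂` forces `a₀ = 0`, so the values on the slice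
`y = -s₁ s₂` sum to zero and cannot all be at least `1`. -/

theorem sum_slice_eq_four_mul (a₀ a₁ a₂ a₃ a₁₂ a₁₃ a₂₃ : ℝ) (h : ℝ → ℝ → ℝ → ℝ)
    (hdef : ∀ s₁ s₂ y : ℝ, h s₁ s₂ y =
      a₀ + a₁ * s₁ + a₂ * s₂ + a₃ * y + a₁₂ * s₁ * s₂ + a₁₃ * s₁ * y + a₂₃ * s₂ * y)
    (ε : ℝ) :
    h 1 1 ε + h 1 (-1) (-ε) + h (-1) 1 (-ε) + h (-1) (-1) ε = 4 * a₀ := by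
  simp only [hdef]
  ring

theorem stmt_4 (a₀ a₁ a₂ a₃ a₁₂ a₁₃ a₂₃ : ℝ)
    (h : ℝ → ℝ → ℝ → ℝ)
    (hdef : ∀ s₁ s₂ y : ℝ, h s₁ s₂ y =
      a₀ + a₁ * s₁ + a₂ * s₂ + a₃ * y + a₁₂ * s₁ * s₂ + a₁₃ * s₁ * y + a₂₃ * s₂ * y)
    (hvanish : ∀ s₁ s₂ : ℝ, s₁ ∈ ({-1, 1} : Set ℝ) → s₂ ∈ ({-1, 1} : Set ℝ) →
      h s₁ s₂ (s₁ * s₂) = 0) :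
    h 1 1 (-1) + h 1 (-1) 1 + h (-1) 1 1 + h (-1) (-1) (-1) = 0 ∧
    ¬ ∀ s₁ s₂ : ℝ, s₁ ∈ ({-1, 1} : Set ℝ) → s₂ ∈ ({-1, 1} : Set ℝ) →
        1 ≤ h s₁ s₂ (-(s₁ * s₂)) := by
  have neg_one_mem : (-1 : ℝ) ∈ ({-1, 1} : Set ℝ) := Or.inl rfl
  have one_mem : (1 : ℝ) ∈ ({-1, 1} : Set ℝ) := Or.inr rfl
  have ha₀ : a₀ = 0 := by
    have hsum := sum_slice_eq_four_mul a₀ a₁ a₂ a₃ a₁₂ a₁₃ a₂₃ h hdef 1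
    have h₁ := hvanish 1 1 one_mem one_mem
    have h₂ := hvanish 1 (-1) one_mem neg_one_mem
    have h₃ := hvanish (-1) 1 neg_one_mem one_mem
    have h₄ := hvanish (-1) (-1) neg_one_mem neg_one_mem
    norm_num at hsum h₁ h₂ h₃ h₄
    linarith
  have hodd : h 1 1 (-1) + h 1 (-1) 1 + h (-1) 1 1 + h (-1) (-1) (-1) = 0 := by
    simpa [ha₀] using sum_slice_eq_four_mul a₀ a₁ a₂ a₃ a₁₂ a₁₃ a₂₃ h hdef (-1)
  refine ⟨hodd, fun hall => ?_⟩
  have h₁ := hall 1 1 one_mem one_mem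
  have h₂ := hall 1 (-1) one_mem neg_one_mem
  have h₃ := hall (-1) 1 neg_one_mem one_mem
  have h₄ := hall (-1) (-1) neg_one_mem neg_one_mem
  norm_num at h₁ h₂ h₃ h₄
  linarith
end

section
/- For any d ≥ 1 and Boolean variables x₁,…,x_d ∈ {0,1}, the negative monomial −∏ᵢ₌₁^d xᵢ equals min over y ∈ {0,1} of ((d−1)y − ∑ᵢ₌₁^d xᵢ y). -/
open Finset

variable {ι : Type*} [Fintype ι]

lemma sum_lt_card_of_le_one {x : ι → ℤ} (hx : ∀ i, x i ≤ 1) {j : ι} (hj : x j < 1) :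
    ∑ i, x i < Fintype.card ι := by
  simpa using sum_lt_sum (fun i _ => hx i) ⟨j, mem_univ j, hj⟩

theorem neg_prod_eq_min_of_forall_eq_zero_or_eq_one {x : ι → ℤ}
    (hx : ∀ i, x i = 0 ∨ x i = 1) :
    -(∏ i, x i) = min 0 ((Fintype.card ι : ℤ) - 1 - ∑ i, x i) := by
  by_cases hone : ∀ i, x i = 1
  · simp [hone]
  · obtain ⟨j, hj⟩ := not_forall.mp hone
    have hj0 : x j = 0 := (hx j).resolve_right hj
    have hsum : ∑ i, x i < Fintype.card ι :=
      sum_lt_card_of_le_one (fun i => by rcases hx i with h | h <;> simp [h])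
        (j := j) (by simp [hj0])
    rw [prod_eq_zero (mem_univ j) hj0, min_eq_left (by omega), neg_zero]

theorem stmt_9_general (d : ℕ) (x : Fin d → ℤ) (hx : ∀ i, x i = 0 ∨ x i = 1) :
    -(∏ i, x i) =
      min (((d : ℤ) - 1) * 0 - (∑ i, x i) * 0) (((d : ℤ) - 1) * 1 - (∑ i, x i) * 1) := by
  simpa using neg_prod_eq_min_of_forall_eq_zero_or_eq_one hx

theorem stmt_9 (d : ℕ) (hd : 1 ≤ d) (x : Fin d → ℤ) (hx : ∀ i, x i = 0 ∨ x i = 1) :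
    -(∏ i, x i) =
      min (((d : ℤ) - 1) * 0 - (∑ i, x i) * 0) (((d : ℤ) - 1) * 1 - (∑ i, x i) * 1) :=
  stmt_9_general d x hx
end
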